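/- arXiv:2512.18188 — 5 statements merged into one kernel-verified Lean document; each statement's English description precedes it below -/
import Mathlib

section
/- For every integer k ≥ 1, the infimum over x ∈ [0,1] of max_{0 ≤ m ≤ k} C(k,m)·x^(k−m)·(1−x)^m equals C(k, ⌊k/2⌋) · ( ⌊(k+1)/2⌋·⌈(k+1)/2⌉ / (⌊(k+1)/2⌋+⌈(k+1)/2⌉)² )^(k/2). -/
/-!
Write `b_m(x) = C(k,m) x^(k-m) (1-x)^m`. At the grid point `x_j = (k-j)/(k+1)` the index `m = j`
is a mode of `m ↦ b_m(x_j)` (tied with `j + 1`), and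
`(k+1)^k b_j(x_j) = C(k,j) (k-j)^(k-j) (j+1)^j`. Comparing consecutive values of the latter reduces
to the monotonicity of `(1 + 1/n)^n`, so it is smallest at `j = ⌊k/2⌋`. Hence the maximum over `m`
at `x_⌊k/2⌋` equals `b_⌊k/2⌋(x_⌊k/2⌋)`, and this is also a lower bound everywhere: every `x` lies
between two grid points `x_m ≤ x ≤ x_(m-1)` (with `x_(-1) = 1`), and `b_m` is log-concave, so
`b_m(x) ≥ min (b_m(x_m), b_m(x_(m-1))) = min (b_m(x_m), b_(m-1)(x_(m-1)))`.
-/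

open Finset

lemma apply_le_apply_of_peak {β : Type*} [Preorder β] {f : ℕ → β} {c n m : ℕ}
    (hup : ∀ j < c, f j ≤ f (j + 1)) (hdown : ∀ j, c ≤ j → j < n → f (j + 1) ≤ f j)
    (hm : m ≤ n) : f m ≤ f c := by
  rcases le_total m c with hmc | hcm
  · exact monotoneOn_of_le_add_one Set.ordConnected_Iic (fun j _ _ hj => hup j hj)
      hmc (Set.mem_Iic.2 le_rfl) hmc
  · exact antitoneOn_of_add_one_le Set.ordConnected_Icc
      (fun j _ hj hj' => hdown j hj.1 (by simpa using hj'.2)) ⟨le_rfl, hcm.trans hm⟩ ⟨hcm, hm⟩ hcm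

lemma apply_le_apply_of_valley {β : Type*} [Preorder β] {f : ℕ → β} {c n m : ℕ}
    (hdown : ∀ j < c, f (j + 1) ≤ f j) (hup : ∀ j, c ≤ j → j < n → f j ≤ f (j + 1))
    (hm : m ≤ n) : f c ≤ f m :=
  apply_le_apply_of_peak (β := βᵒᵈ) hdown hup hm

lemma monotone_add_one_div_pow : Monotone fun n : ℕ => (((n : ℝ) + 1) / n) ^ n := by
  refine monotone_nat_of_le_succ fun n => ?_
  rcases n.eq_zero_or_pos with rfl | hn
  · norm_num
  have hn' : (0 : ℝ) < n := by exact_mod_cast hn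
  set a : ℝ := -1 / ((n : ℝ) + 1) ^ 2
  have bernoulli : 1 + ((n + 1 : ℕ) : ℝ) * a ≤ (1 + a) ^ (n + 1) := by
    refine one_add_mul_le_pow ?_ _
    have : 1 / ((n : ℝ) + 1) ^ 2 ≤ 1 := by
      rw [div_le_one (by positivity)]; nlinarith
    simp only [a, neg_div]; linarith
  have h₁ : ((n : ℝ) + 1) / n * (1 + ((n + 1 : ℕ) : ℝ) * a) = 1 := by
    simp only [a]; push_cast; field_simp; ring
  have h₂ : ((n : ℝ) + 1) / n * (1 + a) = ((n : ℝ) + 1 + 1) / (n + 1) := by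
    simp only [a]; field_simp; ring
  push_cast
  calc (((n : ℝ) + 1) / n) ^ n
      = (((n : ℝ) + 1) / n) ^ n * (((n : ℝ) + 1) / n * (1 + ((n + 1 : ℕ) : ℝ) * a)) := by
        rw [h₁, mul_one]
    _ ≤ (((n : ℝ) + 1) / n) ^ n * (((n : ℝ) + 1) / n * (1 + a) ^ (n + 1)) := by gcongr
    _ = (((n : ℝ) + 1) / n * (1 + a)) ^ (n + 1) := by rw [← mul_assoc, ← pow_succ, mul_pow]
    _ = (((n : ℝ) + 1 + 1) / (n + 1)) ^ (n + 1) := by rw [h₂]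

lemma add_one_pow_mul_pow_le {s t : ℕ} (h : s ≤ t) :
    (s + 1) ^ s * t ^ t ≤ (t + 1) ^ t * s ^ s := by
  have key := monotone_add_one_div_pow h
  simp only [div_pow] at key
  have hs : (0 : ℝ) < (s : ℝ) ^ s := by exact_mod_cast Nat.pow_self_pos
  have ht : (0 : ℝ) < (t : ℝ) ^ t := by exact_mod_cast Nat.pow_self_pos
  rw [div_le_div_iff₀ hs ht] at key
  exact_mod_cast key

lemma quasiconcaveOn_pow_mul_one_sub_pow (p q : ℕ) :
    QuasiconcaveOn ℝ (Set.Icc 0 1) fun x : ℝ => x ^ p * (1 - x) ^ q := by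
  refine quasiconcaveOn_iff_min_le.2 ⟨convex_Icc 0 1, ?_⟩
  rintro x ⟨hx0, hx1⟩ y ⟨hy0, hy1⟩ a b ha hb hab
  simp only [smul_eq_mul]
  set fx := x ^ p * (1 - x) ^ q
  set fy := y ^ p * (1 - y) ^ q
  have hx' : 0 ≤ 1 - x := by linarith
  have hy' : 0 ≤ 1 - y := by linarith
  have hmin : 0 ≤ min fx fy := le_min (by positivity) (by positivity)
  have geom_le : x ^ a * y ^ b ≤ a * x + b * y :=
    Real.geom_mean_le_arith_mean2_weighted ha hb hx0 hy0 hab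
  have geom_le' : (1 - x) ^ a * (1 - y) ^ b ≤ 1 - (a * x + b * y) := by
    have := Real.geom_mean_le_arith_mean2_weighted ha hb hx' hy' hab
    linarith
  calc min fx fy = min fx fy ^ a * min fx fy ^ b := by
        rw [← Real.rpow_add' hmin (by rw [hab]; norm_num), hab, Real.rpow_one]
    _ ≤ fx ^ a * fy ^ b := by gcongr; exacts [min_le_left _ _, min_le_right _ _]
    _ = (x ^ a * y ^ b) ^ p * ((1 - x) ^ a * (1 - y) ^ b) ^ q := by
        rw [Real.mul_rpow (by positivity) (by positivity),
          Real.mul_rpow (by positivity) (by positivity)]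
        simp only [mul_pow, Real.rpow_pow_comm hx0, Real.rpow_pow_comm hy0,
          Real.rpow_pow_comm hx', Real.rpow_pow_comm hy']
        ring
    _ ≤ (a * x + b * y) ^ p * (1 - (a * x + b * y)) ^ q := by gcongr

lemma QuasiconcaveOn.min_le_of_mem_Icc {β : Type*} [LinearOrder β] {s : Set ℝ} {f : ℝ → β}
    (hf : QuasiconcaveOn ℝ s f) {u v x : ℝ} (hu : u ∈ s) (hv : v ∈ s) (hx : x ∈ Set.Icc u v) :
    min (f u) (f v) ≤ f x :=
  ((hf _).segment_subset ⟨hu, min_le_left _ _⟩ ⟨hv, min_le_right _ _⟩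
    (by rwa [segment_eq_Icc (hx.1.trans hx.2)])).2

lemma exists_nat_sub_one_le_le {t : ℝ} {n : ℕ} (h₀ : 0 ≤ t) (h₁ : t ≤ n + 1) :
    ∃ m ≤ n, t - 1 ≤ m ∧ (m : ℝ) ≤ t := by
  rcases le_or_gt n ⌊t⌋₊ with hn | hn
  · exact ⟨n, le_rfl, by linarith, (Nat.cast_le.2 hn).trans (Nat.floor_le h₀)⟩
  · exact ⟨⌊t⌋₊, hn.le, by linarith [Nat.lt_floor_add_one t], Nat.floor_le h₀⟩

def binomWeight (k m : ℕ) (x : ℝ) : ℝ := k.choose m * x ^ (k - m) * (1 - x) ^ m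

lemma binomWeight_nonneg (k m : ℕ) {x : ℝ} (hx₀ : 0 ≤ x) (hx₁ : x ≤ 1) :
    0 ≤ binomWeight k m x := by
  have : 0 ≤ 1 - x := by linarith
  unfold binomWeight; positivity

lemma binomWeight_succ_mul {k m : ℕ} (hm : m < k) (x : ℝ) :
    binomWeight k (m + 1) x * ((m + 1) * x) = binomWeight k m x * ((k - m) * (1 - x)) := by
  obtain ⟨d, rfl⟩ : ∃ d, k = m + 1 + d := ⟨k - m - 1, by omega⟩
  have hchoose : ((m + 1 + d).choose (m + 1) : ℝ) * (m + 1) = (m + 1 + d).choose m * (d + 1) := by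
    have := Nat.choose_succ_right_eq (m + 1 + d) m
    rw [show m + 1 + d - m = d + 1 by omega] at this
    exact_mod_cast this
  simp only [binomWeight, show m + 1 + d - (m + 1) = d by omega,
    show m + 1 + d - m = d + 1 by omega]
  push_cast
  linear_combination x ^ (d + 1) * (1 - x) ^ m * (1 - x) * hchoose

lemma binomWeight_le_of_mode {k c m : ℕ} {x : ℝ} (hx : 0 < x)
    (hc : (c : ℝ) ≤ (k + 1) * (1 - x)) (hc' : (k + 1) * (1 - x) ≤ c + 1) (hm : m ≤ k) :
    binomWeight k m x ≤ binomWeight k c x := by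
  have hx₁ : x ≤ 1 := by nlinarith [(c.cast_nonneg : (0 : ℝ) ≤ c)]
  have hck : (c : ℝ) < k + 1 := by nlinarith
  have hx₀ : 0 ≤ x := hx.le
  -- `b_(j+1) / b_j = (k - j)(1 - x) / ((j + 1) x)`, which is `≥ 1` iff `j + 1 ≤ (k + 1)(1 - x)`.
  refine apply_le_apply_of_peak (f := fun j => binomWeight k j x) (n := k)
    (fun j hj => ?_) (fun j hcj hjk => ?_) hm
  · have hj' : (j : ℝ) + 1 ≤ c := by exact_mod_cast hj
    have hjk : j < k := by
      have : (j : ℝ) < k := by linarith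
      exact_mod_cast this
    refine le_of_mul_le_mul_right ?_ (by positivity : (0 : ℝ) < (j + 1) * x)
    rw [binomWeight_succ_mul hjk]
    have : ((j : ℝ) + 1) * x ≤ (k - j) * (1 - x) := by nlinarith
    exact mul_le_mul_of_nonneg_left this (binomWeight_nonneg k j hx₀ hx₁)
  · have hcj' : (c : ℝ) ≤ j := by exact_mod_cast hcj
    refine le_of_mul_le_mul_right ?_ (by positivity : (0 : ℝ) < (j + 1) * x)
    rw [binomWeight_succ_mul hjk]
    have : ((k : ℝ) - j) * (1 - x) ≤ (j + 1) * x := by nlinarith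
    exact mul_le_mul_of_nonneg_left this (binomWeight_nonneg k j hx₀ hx₁)

lemma sup'_binomWeight_eq_of_mode {k c : ℕ} {x : ℝ} (hx : 0 < x)
    (hc : (c : ℝ) ≤ (k + 1) * (1 - x)) (hc' : (k + 1) * (1 - x) ≤ c + 1) (hck : c ≤ k) :
    (range (k + 1)).sup' nonempty_range_add_one (fun m => binomWeight k m x) = binomWeight k c x :=
  le_antisymm
    (sup'_le _ _ fun _ hm => binomWeight_le_of_mode hx hc hc' (Nat.lt_succ_iff.1 (mem_range.1 hm)))
    (le_sup' (fun m => binomWeight k m x) (mem_range.2 (Nat.lt_succ_of_le hck)))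

lemma quasiconcaveOn_binomWeight (k m : ℕ) :
    QuasiconcaveOn ℝ (Set.Icc 0 1) (binomWeight k m) := by
  have h : binomWeight k m =
      (fun y => (k.choose m : ℝ) * y) ∘ fun x => x ^ (k - m) * (1 - x) ^ m := by
    ext x; simp only [binomWeight, Function.comp_apply, mul_assoc]
  rw [h]
  exact (quasiconcaveOn_pow_mul_one_sub_pow (k - m) m).monotone_comp
    (monotone_mul_left_of_nonneg (Nat.cast_nonneg _))

def peakNumerator (k j : ℕ) : ℕ := k.choose j * (k - j) ^ (k - j) * (j + 1) ^ j

lemma binomWeight_sub_div_eq_peakNumerator {k j : ℕ} (hj : j ≤ k) :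
    binomWeight k j (((k : ℝ) - j) / (k + 1)) = peakNumerator k j / ((k : ℝ) + 1) ^ k := by
  have hk : (k : ℝ) + 1 ≠ 0 := by positivity
  have hsub : 1 - ((k : ℝ) - j) / (k + 1) = (j + 1) / (k + 1) := by field_simp; ring
  have hpow : ((k : ℝ) + 1) ^ k = ((k : ℝ) + 1) ^ (k - j) * ((k : ℝ) + 1) ^ j := by
    rw [← pow_add, Nat.sub_add_cancel hj]
  rw [binomWeight, hsub, div_pow, div_pow, hpow, peakNumerator]
  push_cast [Nat.cast_sub hj]
  field_simp

lemma peakNumerator_succ_mul (j d : ℕ) :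
    peakNumerator (j + 1 + d) (j + 1) * ((d + 1) ^ d * (j + 1) ^ (j + 1)) =
      peakNumerator (j + 1 + d) j * (d ^ d * (j + 2) ^ (j + 1)) := by
  have hchoose := Nat.choose_succ_right_eq (j + 1 + d) j
  rw [show j + 1 + d - j = d + 1 by omega] at hchoose
  simp only [peakNumerator, show j + 1 + d - (j + 1) = d by omega,
    show j + 1 + d - j = d + 1 by omega]
  zify at hchoose ⊢
  linear_combination ((d + 1 : ℤ) ^ d * (j + 1) ^ j * d ^ d * (j + 2) ^ (j + 1)) * hchoose

lemma peakNumerator_half_le {k j : ℕ} (hj : j ≤ k) :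
    peakNumerator k (k / 2) ≤ peakNumerator k j := by
  refine apply_le_apply_of_valley (f := peakNumerator k) (n := k) (fun i hi => ?_)
    (fun i hi hik => ?_) hj
  · obtain ⟨d, rfl⟩ : ∃ d, k = i + 1 + d := ⟨k - i - 1, by omega⟩
    have hle := add_one_pow_mul_pow_le (show i + 1 ≤ d by omega)
    refine Nat.le_of_mul_le_mul_right ?_ (by positivity : 0 < (d + 1) ^ d * (i + 1) ^ (i + 1))
    rw [peakNumerator_succ_mul]
    exact Nat.mul_le_mul_left _ ((mul_comm _ _).trans_le hle)
  · obtain ⟨d, rfl⟩ : ∃ d, k = i + 1 + d := ⟨k - i - 1, by omega⟩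
    have hle := add_one_pow_mul_pow_le (show d ≤ i + 1 by omega)
    refine Nat.le_of_mul_le_mul_right ?_
      (Nat.mul_pos Nat.pow_self_pos (by positivity) : 0 < d ^ d * (i + 2) ^ (i + 1))
    rw [← peakNumerator_succ_mul]
    exact Nat.mul_le_mul_left _ (hle.trans_eq (mul_comm _ _))

lemma binomWeight_half_eq_choose_mul_rpow (k : ℕ) :
    binomWeight k (k / 2) (((k : ℝ) - (k / 2 : ℕ)) / (k + 1)) =
      (k.choose (k / 2) : ℝ) *
        (((((k + 1) / 2 : ℕ) : ℝ) * (((k + 2) / 2 : ℕ) : ℝ)) /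
            ((((k + 1) / 2 : ℕ) : ℝ) + (((k + 2) / 2 : ℕ) : ℝ)) ^ 2) ^ ((k : ℝ) / 2) := by
  obtain ⟨n, rfl | rfl⟩ := Nat.even_or_odd' k
  · rw [show 2 * n / 2 = n by omega, show (2 * n + 1) / 2 = n by omega,
      show (2 * n + 2) / 2 = n + 1 by omega, binomWeight, show 2 * n - n = n by omega]
    push_cast
    rw [show (2 * (n : ℝ)) / 2 = n by ring, Real.rpow_natCast, mul_assoc, ← mul_pow]
    congr 2
    field_simp
    ring
  · rw [show (2 * n + 1) / 2 = n by omega, show (2 * n + 1 + 1) / 2 = n + 1 by omega,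
      show (2 * n + 1 + 2) / 2 = n + 1 by omega, binomWeight, show 2 * n + 1 - n = n + 1 by omega]
    push_cast
    have hz : (((n : ℝ) + 1) * (n + 1)) / ((n + 1) + (n + 1)) ^ 2 = (1 / 2) ^ (2 : ℝ) := by
      rw [Real.rpow_two]; field_simp; ring
    have hexp : (2 : ℝ) * ((2 * n + 1) / 2) = ((2 * n + 1 : ℕ) : ℝ) := by push_cast; ring
    rw [hz, ← Real.rpow_mul (by norm_num), hexp, Real.rpow_natCast]
    have hhalf : (2 * (n : ℝ) + 1 - n) / (2 * n + 1 + 1) = 1 / 2 := by field_simp; ring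
    rw [hhalf, show (1 : ℝ) - 1 / 2 = 1 / 2 by norm_num, mul_assoc, ← pow_add,
      show n + 1 + n = 2 * n + 1 by ring]

lemma binomWeight_half_le_binomWeight_sub_div {k j : ℕ} (hj : j ≤ k) :
    binomWeight k (k / 2) (((k : ℝ) - (k / 2 : ℕ)) / (k + 1)) ≤
      binomWeight k j (((k : ℝ) - j) / (k + 1)) := by
  rw [binomWeight_sub_div_eq_peakNumerator (Nat.div_le_self k 2),
    binomWeight_sub_div_eq_peakNumerator hj]
  gcongr
  exact_mod_cast peakNumerator_half_le hj

lemma exists_binomWeight_half_le (k : ℕ) {x : ℝ} (hx : x ∈ Set.Icc 0 1) :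
    ∃ m ≤ k, binomWeight k (k / 2) (((k : ℝ) - (k / 2 : ℕ)) / (k + 1)) ≤ binomWeight k m x := by
  have hk : (0 : ℝ) < k + 1 := by positivity
  obtain ⟨m, hmk, hm₁, hm₂⟩ := exists_nat_sub_one_le_le (t := (k + 1) * (1 - x)) (n := k)
    (by nlinarith [hx.2]) (by nlinarith [hx.1])
  have hmk' : (m : ℝ) ≤ k := by exact_mod_cast hmk
  set u : ℝ := ((k : ℝ) - m) / (k + 1)
  set v : ℝ := ((k : ℝ) - m + 1) / (k + 1)
  have hu : u ∈ Set.Icc 0 1 := ⟨div_nonneg (by linarith) hk.le, (div_le_one hk).2 (by linarith)⟩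
  have hv : v ∈ Set.Icc 0 1 := ⟨div_nonneg (by linarith) hk.le, (div_le_one hk).2 (by linarith)⟩
  have hx' : x ∈ Set.Icc u v :=
    ⟨(div_le_iff₀ hk).2 (by linarith), (le_div_iff₀ hk).2 (by linarith)⟩
  have half_le_v : binomWeight k (k / 2) (((k : ℝ) - (k / 2 : ℕ)) / (k + 1)) ≤
      binomWeight k m v := by
    rcases m.eq_zero_or_pos with rfl | hm
    · calc _ ≤ binomWeight k k (((k : ℝ) - k) / (k + 1)) :=
            binomWeight_half_le_binomWeight_sub_div le_rfl
        _ = binomWeight k 0 v := by simp [v, binomWeight, div_self hk.ne']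
    · have hv' : v = ((k : ℝ) - (m - 1 : ℕ)) / (k + 1) := by push_cast [hm]; ring
      have hvm : ((k : ℝ) + 1) * (1 - v) = m := by simp only [v]; field_simp; ring
      calc _ ≤ binomWeight k (m - 1) v := by
            rw [hv']; exact binomWeight_half_le_binomWeight_sub_div (by omega)
        _ ≤ binomWeight k m v :=
            binomWeight_le_of_mode (div_pos (by linarith) hk) hvm.ge (by linarith) (by omega)
  exact ⟨m, hmk, (le_min (binomWeight_half_le_binomWeight_sub_div hmk) half_le_v).trans
    ((quasiconcaveOn_binomWeight k m).min_le_of_mem_Icc hu hv hx')⟩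

/-- For every integer `k ≥ 1`, the infimum over `x ∈ [0,1]` of
`max_{0 ≤ m ≤ k} C(k,m) x^(k-m) (1-x)^m` equals
`C(k, ⌊k/2⌋) · (⌊(k+1)/2⌋⌈(k+1)/2⌉ / (⌊(k+1)/2⌋+⌈(k+1)/2⌉)²)^(k/2)`. -/
theorem stmt1 (k : ℕ) (hk : 1 ≤ k) :
    IsGLB { y : ℝ | ∃ x ∈ Set.Icc (0 : ℝ) 1,
        y = (Finset.range (k + 1)).sup' Finset.nonempty_range_add_one
              (fun m => (k.choose m : ℝ) * x ^ (k - m) * (1 - x) ^ m) }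
      ((k.choose (k / 2) : ℝ) *
        (((((k + 1) / 2 : ℕ) : ℝ) * (((k + 2) / 2 : ℕ) : ℝ)) /
            ((((k + 1) / 2 : ℕ) : ℝ) + (((k + 2) / 2 : ℕ) : ℝ)) ^ 2) ^ ((k : ℝ) / 2)) := by
  rw [← binomWeight_half_eq_choose_mul_rpow]
  set x₀ : ℝ := ((k : ℝ) - (k / 2 : ℕ)) / (k + 1)
  have hk' : (0 : ℝ) < k + 1 := by positivity
  have hhalf : ((k / 2 : ℕ) : ℝ) < k := by exact_mod_cast Nat.div_lt_self hk (by norm_num)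
  have hx₀ : 0 < x₀ := div_pos (by linarith) hk'
  have hmode : ((k : ℝ) + 1) * (1 - x₀) = (k / 2 : ℕ) + 1 := by
    simp only [x₀]; field_simp; ring
  have hsup := sup'_binomWeight_eq_of_mode hx₀ (by linarith) hmode.le (Nat.div_le_self k 2)
  refine IsLeast.isGLB ⟨⟨x₀, ⟨hx₀.le, (div_le_one hk').2 (by linarith)⟩, hsup.symm⟩, ?_⟩
  rintro _ ⟨x, hx, rfl⟩
  obtain ⟨m, hm, hle⟩ := exists_binomWeight_half_le k hx
  exact hle.trans (le_sup' (fun m => binomWeight k m x) (mem_range.2 (by omega)))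
end

section
/- For k odd, the infimum over x ∈ [0,1] of max_{0 ≤ m ≤ k} C(k,m)·x^(k−m)·(1−x)^m equals C(k,⌊k/2⌋)/2^k, attained at x = 1/2. -/
/-!
Write `B_j(x) = C(k,j) x^j (1-x)^(k-j)`; the maximum in the theorem is `max_j B_j(1-x)`, and
`B_{k-j}(x) = B_j(1-x)`, so it suffices to bound `max_j B_j(x)` from below for `x ≥ 1/2`.
Cut `[1/2, 1]` at the points `x_j = j/(k+1)`, `(k+1)/2 ≤ j ≤ k`. Each `B_j` is log-concave
(weighted AM-GM), so on `[x_j, x_{j+1}]` it is at least the smaller of its endpoint values.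
With `i = k - j ≤ j`, the inequality `B_j(x_j) ≤ B_j(x_{j+1})` reduces to
`(i+1)^i j^j ≤ i^i (j+1)^j`, i.e. to the monotonicity of `(1 + 1/n)^n`, and
`B_j(x_{j+1}) = B_{j+1}(x_{j+1})`. Hence `B_j(x_j)` increases in `j`, starting from
`B_{(k+1)/2}(1/2) = C(k, k/2)/2^k`.
-/

theorem one_add_inv_pow_monotone : Monotone fun n : ℕ => (1 + (n : ℝ)⁻¹) ^ n := by
  refine monotone_nat_of_le_succ fun n => ?_
  rcases Nat.eq_zero_or_pos n with rfl | hn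
  · norm_num
  have hx : (0 : ℝ) < n := by exact_mod_cast hn
  have bernoulli : (n : ℝ) / (n + 1) ≤ (n * (n + 2) / (n + 1) ^ 2) ^ (n + 1) := by
    have h := one_add_mul_le_pow (a := -1 / ((n : ℝ) + 1) ^ 2)
      (by rw [neg_div, neg_le_neg_iff, div_le_iff₀ (by positivity)]; nlinarith) (n + 1)
    have e₁ : 1 + ((n + 1 : ℕ) : ℝ) * (-1 / ((n : ℝ) + 1) ^ 2) = n / (n + 1) := by
      push_cast
      field_simp
      ring
    have e₂ : 1 + -1 / ((n : ℝ) + 1) ^ 2 = n * (n + 2) / (n + 1) ^ 2 := by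
      field_simp
      ring
    rwa [e₁, e₂] at h
  push_cast
  calc (1 + (n : ℝ)⁻¹) ^ n = n / (n + 1) * ((n + 1) / n) ^ (n + 1) := by
        rw [pow_succ]
        field_simp
    _ ≤ (n * (n + 2) / (n + 1) ^ 2) ^ (n + 1) * (((n : ℝ) + 1) / n) ^ (n + 1) := by
        gcongr
    _ = (1 + ((n : ℝ) + 1)⁻¹) ^ (n + 1) := by
        rw [← mul_pow]
        congr 1
        field_simp
        ring

theorem add_one_pow_mul_pow_le_s2 {m n : ℕ} (hmn : m ≤ n) :
    ((m : ℝ) + 1) ^ m * (n : ℝ) ^ n ≤ (m : ℝ) ^ m * ((n : ℝ) + 1) ^ n := by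
  rcases Nat.eq_zero_or_pos m with rfl | hm
  · simp only [CharP.cast_eq_zero, pow_zero, one_mul]
    gcongr
    linarith
  have hm' : (0 : ℝ) < m := by exact_mod_cast hm
  have hn' : (0 : ℝ) < n := by exact_mod_cast hm.trans_le hmn
  have h := one_add_inv_pow_monotone hmn
  simp only [inv_eq_one_div, one_add_div hm'.ne', one_add_div hn'.ne', div_pow] at h
  rw [div_le_div_iff₀ (by positivity) (by positivity)] at h
  linarith

noncomputable def binomialTerm (k j : ℕ) (x : ℝ) : ℝ := k.choose j * x ^ j * (1 - x) ^ (k - j)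

theorem binomialTerm_symm {k j : ℕ} (hj : j ≤ k) (x : ℝ) :
    binomialTerm k (k - j) x = binomialTerm k j (1 - x) := by
  simp only [binomialTerm, Nat.choose_symm hj, Nat.sub_sub_self hj, sub_sub_cancel]
  ring

theorem binomialTerm_half {k j : ℕ} (hj : j ≤ k) :
    binomialTerm k j (1 / 2) = k.choose j / 2 ^ k := by
  rw [binomialTerm, show (1 : ℝ) - 1 / 2 = 1 / 2 by norm_num, mul_assoc, ← pow_add,
    Nat.add_sub_cancel' hj, one_div_pow, mul_one_div]

theorem binomialTerm_succ_div_eq {k j : ℕ} (hj : j < k) :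
    binomialTerm k j ((j + 1) / (k + 1)) = binomialTerm k (j + 1) ((j + 1) / (k + 1)) := by
  obtain ⟨i, rfl⟩ : ∃ i, k = j + 1 + i := ⟨k - (j + 1), by omega⟩
  set N : ℝ := ((j + 1 + i : ℕ) : ℝ) + 1
  have hchoose :
      ((j + 1 + i).choose j : ℝ) * (i + 1) = (j + 1 + i).choose (j + 1) * (j + 1) := by
    have := Nat.choose_succ_right_eq (j + 1 + i) j
    rw [show j + 1 + i - j = i + 1 by omega] at this
    exact_mod_cast this.symm
  have hsub : 1 - ((j : ℝ) + 1) / N = (i + 1) / N := by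
    simp only [N]
    push_cast
    field_simp
    ring
  rw [binomialTerm, binomialTerm, hsub, show j + 1 + i - j = i + 1 by omega,
    show j + 1 + i - (j + 1) = i by omega, pow_succ, pow_succ]
  linear_combination (((j : ℝ) + 1) / N) ^ j * (((i : ℝ) + 1) / N) ^ i / N * hchoose

theorem binomialTerm_div_le_succ_div {k j : ℕ} (hjk : j ≤ k) (hkj : k ≤ 2 * j) :
    binomialTerm k j (j / (k + 1)) ≤ binomialTerm k j ((j + 1) / (k + 1)) := by
  obtain ⟨i, rfl⟩ : ∃ i, k = j + i := ⟨k - j, by omega⟩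
  have hsub₁ : 1 - (j : ℝ) / ((j + i : ℕ) + 1) = (i + 1) / ((j + i : ℕ) + 1) := by
    field_simp
    push_cast
    ring
  have hsub₂ : 1 - ((j : ℝ) + 1) / ((j + i : ℕ) + 1) = i / ((j + i : ℕ) + 1) := by
    field_simp
    push_cast
    ring
  rw [binomialTerm, binomialTerm, hsub₁, hsub₂, Nat.add_sub_cancel_left]
  simp only [div_pow]
  field_simp
  rw [mul_assoc, mul_assoc]
  gcongr ?_ * ?_
  linarith [add_one_pow_mul_pow_le_s2 (m := i) (n := j) (by omega)]

theorem binomialTerm_div_monotoneOn (k : ℕ) :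
    MonotoneOn (fun j : ℕ => binomialTerm k j (j / (k + 1))) (Set.Icc ((k + 1) / 2) k) := by
  refine monotoneOn_of_le_add_one Set.ordConnected_Icc fun j _ hj hj₁ => ?_
  calc binomialTerm k j (j / (k + 1))
      ≤ binomialTerm k j ((j + 1) / (k + 1)) :=
        binomialTerm_div_le_succ_div (by have := hj₁.2; omega) (by have := hj.1; omega)
    _ = binomialTerm k (j + 1) (((j + 1 : ℕ) : ℝ) / (k + 1)) := by
        rw [binomialTerm_succ_div_eq (by have := hj₁.2; omega), Nat.cast_succ]

theorem min_le_rpow_mul_rpow {a b l m : ℝ} (ha : 0 ≤ a) (hb : 0 ≤ b) (hl : 0 ≤ l)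
    (hm : 0 ≤ m) (hlm : l + m = 1) : min a b ≤ a ^ l * b ^ m := by
  have hmin : 0 ≤ min a b := le_min ha hb
  calc min a b = min a b ^ l * min a b ^ m := by
        rw [← Real.rpow_add' hmin (by rw [hlm]; norm_num), hlm, Real.rpow_one]
    _ ≤ a ^ l * b ^ m := by gcongr; exacts [min_le_left a b, min_le_right a b]

theorem min_le_pow_mul_one_sub_pow (p q : ℕ) {a b x : ℝ} (ha : 0 ≤ a) (hax : a ≤ x)
    (hxb : x ≤ b) (hb : b ≤ 1) :
    min (a ^ p * (1 - a) ^ q) (b ^ p * (1 - b) ^ q) ≤ x ^ p * (1 - x) ^ q := by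
  have ha₁ : 0 ≤ 1 - a := by linarith
  have hb₀ : 0 ≤ b := by linarith
  have hb₁ : 0 ≤ 1 - b := by linarith
  obtain ⟨l, m, hl, hm, hlm, rfl⟩ : x ∈ segment ℝ a b := by
    rw [segment_eq_Icc (hax.trans hxb)]
    exact ⟨hax, hxb⟩
  have hx : a ^ l * b ^ m ≤ l • a + m • b :=
    Real.geom_mean_le_arith_mean2_weighted hl hm ha hb₀ hlm
  have hx₁ : (1 - a) ^ l * (1 - b) ^ m ≤ 1 - (l • a + m • b) := by
    refine (Real.geom_mean_le_arith_mean2_weighted hl hm ha₁ hb₁ hlm).trans_eq ?_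
    simp only [smul_eq_mul]
    linear_combination hlm
  calc min (a ^ p * (1 - a) ^ q) (b ^ p * (1 - b) ^ q)
      ≤ (a ^ p * (1 - a) ^ q) ^ l * (b ^ p * (1 - b) ^ q) ^ m :=
        min_le_rpow_mul_rpow (by positivity) (by positivity) hl hm hlm
    _ = (a ^ l * b ^ m) ^ p * ((1 - a) ^ l * (1 - b) ^ m) ^ q := by
        rw [Real.mul_rpow (by positivity) (by positivity),
          Real.mul_rpow (by positivity) (by positivity), mul_pow, mul_pow, Real.rpow_pow_comm ha,
          Real.rpow_pow_comm hb₀, Real.rpow_pow_comm ha₁, Real.rpow_pow_comm hb₁]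
        ring
    _ ≤ (l • a + m • b) ^ p * (1 - (l • a + m • b)) ^ q := by gcongr

theorem min_le_binomialTerm (k j : ℕ) {a b x : ℝ} (ha : 0 ≤ a) (hax : a ≤ x) (hxb : x ≤ b)
    (hb : b ≤ 1) : min (binomialTerm k j a) (binomialTerm k j b) ≤ binomialTerm k j x := by
  simp only [binomialTerm, mul_assoc, ← mul_min_of_nonneg _ _ (Nat.cast_nonneg (k.choose j))]
  gcongr
  exact min_le_pow_mul_one_sub_pow j (k - j) ha hax hxb hb

theorem exists_div_le_le_succ_div {m n : ℕ} {x : ℝ} (hmn : m ≤ n) (hmx : m ≤ (n + 1) * x)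
    (hx : x ≤ 1) :
    ∃ j, m ≤ j ∧ j ≤ n ∧ j / (n + 1) ≤ x ∧ x ≤ (j + 1) / (n + 1) := by
  have hN : (0 : ℝ) < n + 1 := by positivity
  have hNx : 0 ≤ (n + 1) * x := (Nat.cast_nonneg m).trans hmx
  refine ⟨min ⌊(n + 1) * x⌋₊ n, le_min (Nat.le_floor hmx) hmn, min_le_right _ _, ?_, ?_⟩
  · rw [div_le_iff₀ hN, mul_comm x]
    exact (Nat.cast_le.mpr (min_le_left _ _)).trans (Nat.floor_le hNx)
  · rw [le_div_iff₀ hN, mul_comm x]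
    rcases le_total ⌊(n + 1) * x⌋₊ n with h | h
    · rw [min_eq_left h]
      exact (Nat.lt_floor_add_one _).le
    · rw [min_eq_right h]
      nlinarith

theorem choose_div_two_pow_le_binomialTerm_of_half_le {k : ℕ} (hk : Odd k) {x : ℝ}
    (hx : 1 / 2 ≤ x) (hx₁ : x ≤ 1) :
    ∃ j ≤ k, (k.choose (k / 2) : ℝ) / 2 ^ k ≤ binomialTerm k j x := by
  obtain ⟨t, rfl⟩ := hk
  obtain ⟨j, htj, hjk, hja, hjb⟩ := exists_div_le_le_succ_div (m := t + 1) (n := 2 * t + 1)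
    (x := x) (by omega) (by push_cast; nlinarith [(Nat.cast_nonneg t : (0 : ℝ) ≤ t)]) hx₁
  have hmid : ((t + 1 : ℕ) : ℝ) / ((2 * t + 1 : ℕ) + 1) = 1 / 2 := by
    push_cast
    field_simp
    ring
  have hgrid : ((2 * t + 1).choose ((2 * t + 1) / 2) : ℝ) / 2 ^ (2 * t + 1)
      ≤ binomialTerm (2 * t + 1) j (j / ((2 * t + 1 : ℕ) + 1)) := by
    have hmono := binomialTerm_div_monotoneOn (2 * t + 1) (a := t + 1) (b := j)
      ⟨by omega, by omega⟩ ⟨by omega, hjk⟩ htj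
    dsimp only at hmono
    rwa [hmid, binomialTerm_half (by omega), ← Nat.choose_symm (by omega),
      show 2 * t + 1 - (t + 1) = (2 * t + 1) / 2 by omega] at hmono
  refine ⟨j, hjk, (le_min hgrid ?_).trans (min_le_binomialTerm _ _ (by positivity) hja hjb ?_)⟩
  · exact hgrid.trans (binomialTerm_div_le_succ_div hjk (by omega))
  · rw [div_le_one (by positivity)]
    exact_mod_cast Nat.succ_le_succ hjk

theorem exists_choose_div_two_pow_le_binomialTerm {k : ℕ} (hk : Odd k) {x : ℝ} (hx₀ : 0 ≤ x)
    (hx₁ : x ≤ 1) : ∃ j ≤ k, (k.choose (k / 2) : ℝ) / 2 ^ k ≤ binomialTerm k j x := by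
  rcases le_total (1 / 2) x with hx | hx
  · exact choose_div_two_pow_le_binomialTerm_of_half_le hk hx hx₁
  · obtain ⟨j, hjk, hj⟩ :=
      choose_div_two_pow_le_binomialTerm_of_half_le hk (x := 1 - x) (by linarith) (by linarith)
    exact ⟨k - j, Nat.sub_le k j, by rwa [binomialTerm_symm hjk]⟩

/-- For `k` odd, the infimum over `x ∈ [0,1]` of
`max_{0 ≤ m ≤ k} C(k,m) x^(k-m) (1-x)^m` equals `C(k,⌊k/2⌋)/2^k`, attained at `x = 1/2`. -/
theorem stmt2 (k : ℕ) (hk : Odd k) :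
    IsGLB { y : ℝ | ∃ x ∈ Set.Icc (0 : ℝ) 1,
        y = (Finset.range (k + 1)).sup' Finset.nonempty_range_add_one
              (fun m => (k.choose m : ℝ) * x ^ (k - m) * (1 - x) ^ m) }
      ((k.choose (k / 2) : ℝ) / 2 ^ k) ∧
    (Finset.range (k + 1)).sup' Finset.nonempty_range_add_one
        (fun m => (k.choose m : ℝ) * (1 / 2 : ℝ) ^ (k - m) * (1 - (1 / 2 : ℝ)) ^ m)
      = (k.choose (k / 2) : ℝ) / 2 ^ k := by
  have hterm (x : ℝ) (m : ℕ) :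
      (k.choose m : ℝ) * x ^ (k - m) * (1 - x) ^ m = binomialTerm k m (1 - x) := by
    rw [binomialTerm, sub_sub_cancel]
    ring
  have hhalf : (Finset.range (k + 1)).sup' Finset.nonempty_range_add_one
      (fun m => (k.choose m : ℝ) * (1 / 2 : ℝ) ^ (k - m) * (1 - (1 / 2 : ℝ)) ^ m)
        = (k.choose (k / 2) : ℝ) / 2 ^ k := by
    have hterm_half (m : ℕ) (hm : m ∈ Finset.range (k + 1)) :
        (k.choose m : ℝ) * (1 / 2 : ℝ) ^ (k - m) * (1 - (1 / 2 : ℝ)) ^ m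
          = k.choose m / 2 ^ k := by
      rw [hterm, show (1 : ℝ) - 1 / 2 = 1 / 2 by norm_num,
        binomialTerm_half (Nat.lt_succ_iff.mp (Finset.mem_range.mp hm))]
    refine le_antisymm (Finset.sup'_le _ _ fun m hm => ?_) ?_
    · rw [hterm_half m hm]
      gcongr
      exact_mod_cast Nat.choose_le_middle m k
    · have hmid : k / 2 ∈ Finset.range (k + 1) := Finset.mem_range.mpr (by omega)
      exact Finset.le_sup'_of_le _ hmid (hterm_half _ hmid).ge
  refine ⟨⟨?_, fun b hb => hb ⟨1 / 2, by norm_num, hhalf.symm⟩⟩, hhalf⟩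
  rintro y ⟨x, ⟨hx₀, hx₁⟩, rfl⟩
  obtain ⟨m, hmk, hm⟩ :=
    exists_choose_div_two_pow_le_binomialTerm hk (x := 1 - x) (by linarith) (by linarith)
  exact hm.trans (Finset.le_sup'_of_le _ (Finset.mem_range.mpr (by omega)) (hterm x m).ge)
end

section
/- For every integer k ≥ 1 and 0 ≤ i ≤ k/2, one has ((k−i)/(k−i+1))^(k−i) ≤ (i/(i+1))^i; equivalently, g_{k,i}((k−i)/(k+1)) ≤ g_{k,i}((k+1−i)/(k+1)) where g_{k,i}(x) = x^(k−i)(1−x)^i. -/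
/-!
By Bernoulli's inequality applied to
`(1 - 1 / (n + 1) ^ 2) ^ n = (n / (n + 1)) ^ n ((n + 2) / (n + 1)) ^ n`, the sequence
`(n / (n + 1)) ^ n` is antitone; since `i ≤ k - i` this is the first inequality.
With `n = k - i`, the two values of `g_{k,i}` are `n ^ n (i + 1) ^ i / (k + 1) ^ k` and
`(n + 1) ^ n i ^ i / (k + 1) ^ k`, so the second inequality is the first one cross-multiplied.
-/

lemma div_add_one_pow_succ_le (n : ℕ) :
    (((n : ℝ) + 1) / ((n : ℝ) + 2)) ^ (n + 1) ≤ ((n : ℝ) / ((n : ℝ) + 1)) ^ n := by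
  set x : ℝ := (n : ℝ)
  have hx : 0 ≤ x := Nat.cast_nonneg n
  have bernoulli : 1 + x * (-1 / (x + 1) ^ 2) ≤ (1 + -1 / (x + 1) ^ 2) ^ n :=
    one_add_mul_le_pow (by rw [neg_div, neg_le_neg_iff, div_le_iff₀ (by positivity)]; nlinarith) n
  have one_le : 1 ≤ (1 + x * (-1 / (x + 1) ^ 2)) * ((x + 2) / (x + 1)) := by
    rw [show (1 + x * (-1 / (x + 1) ^ 2)) * ((x + 2) / (x + 1))
        = ((x + 1) ^ 2 - x) * (x + 2) / (x + 1) ^ 3 by field_simp; ring,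
      one_le_div (by positivity)]
    nlinarith
  have hsq : 1 + -1 / (x + 1) ^ 2 = x / (x + 1) * ((x + 2) / (x + 1)) := by
    field_simp; ring
  calc ((x + 1) / (x + 2)) ^ (n + 1)
      ≤ ((x + 1) / (x + 2)) ^ (n + 1) * ((1 + -1 / (x + 1) ^ 2) ^ n * ((x + 2) / (x + 1))) :=
        le_mul_of_one_le_right (by positivity) (one_le.trans (by gcongr))
    _ = (x / (x + 1)) ^ n * ((x + 1) / (x + 2) * ((x + 2) / (x + 1))) ^ (n + 1) := by
        rw [hsq]
        generalize x / (x + 1) = a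
        generalize (x + 2) / (x + 1) = b
        generalize (x + 1) / (x + 2) = c
        ring
    _ = (x / (x + 1)) ^ n := by
        rw [div_mul_div_cancel₀', div_self, one_pow, mul_one] <;> positivity

lemma antitone_div_add_one_pow : Antitone fun n : ℕ => ((n : ℝ) / ((n : ℝ) + 1)) ^ n :=
  antitone_nat_of_succ_le fun n => by
    simpa only [Nat.cast_succ, add_assoc, one_add_one_eq_two] using div_add_one_pow_succ_le n

theorem stmt5_general (k i : ℕ) (hi : 2 * i ≤ k) :
    (((k : ℝ) - i) / ((k : ℝ) - i + 1)) ^ (k - i) ≤ ((i : ℝ) / ((i : ℝ) + 1)) ^ i ∧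
    (((k : ℝ) - i) / ((k : ℝ) + 1)) ^ (k - i) * (1 - ((k : ℝ) - i) / ((k : ℝ) + 1)) ^ i ≤
      (((k : ℝ) + 1 - i) / ((k : ℝ) + 1)) ^ (k - i) *
        (1 - ((k : ℝ) + 1 - i) / ((k : ℝ) + 1)) ^ i := by
  obtain ⟨n, rfl⟩ : ∃ n, k = n + i := ⟨k - i, by omega⟩
  have hin : i ≤ n := by omega
  simp only [Nat.add_sub_cancel, Nat.cast_add, add_sub_cancel_right]
  have first : ((n : ℝ) / (n + 1)) ^ n ≤ ((i : ℝ) / (i + 1)) ^ i := antitone_div_add_one_pow hin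
  refine ⟨first, ?_⟩
  have cross : (n : ℝ) ^ n * ((i : ℝ) + 1) ^ i ≤ ((n : ℝ) + 1) ^ n * (i : ℝ) ^ i := by
    rw [div_pow, div_pow, div_le_div_iff₀ (by positivity) (by positivity)] at first
    linarith
  have right_base : (n : ℝ) + i + 1 - i = n + 1 := by ring
  have left_compl : 1 - (n : ℝ) / (n + i + 1) = (i + 1) / (n + i + 1) := by field_simp; ring
  have right_compl : 1 - ((n : ℝ) + 1) / (n + i + 1) = i / (n + i + 1) := by field_simp; ring
  rw [right_base, left_compl, right_compl, div_pow, div_pow, div_pow, div_pow, div_mul_div_comm,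
    div_mul_div_comm]
  gcongr

/-- For `k ≥ 1` and `0 ≤ i ≤ k/2`,
`((k-i)/(k-i+1))^(k-i) ≤ (i/(i+1))^i`; equivalently
`g_{k,i}((k-i)/(k+1)) ≤ g_{k,i}((k+1-i)/(k+1))` where `g_{k,i}(x) = x^(k-i)(1-x)^i`. -/
theorem stmt5 (k i : ℕ) (hk : 1 ≤ k) (hi : 2 * i ≤ k) :
    (((k : ℝ) - i) / ((k : ℝ) - i + 1)) ^ (k - i) ≤ ((i : ℝ) / ((i : ℝ) + 1)) ^ i ∧
    (((k : ℝ) - i) / ((k : ℝ) + 1)) ^ (k - i) * (1 - ((k : ℝ) - i) / ((k : ℝ) + 1)) ^ i ≤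
      (((k : ℝ) + 1 - i) / ((k : ℝ) + 1)) ^ (k - i) *
        (1 - ((k : ℝ) + 1 - i) / ((k : ℝ) + 1)) ^ i :=
  stmt5_general k i hi
end

section
/- Poisson binomial probabilities are ultra log-concave: if X₁,…,X_k are independent Bernoulli variables with parameters p₁,…,p_k ∈ [0,1] and f_{k,i} = P(X₁+⋯+X_k = i), then for 1 ≤ i ≤ k−1, f_{k,i}² ≥ ((i+1)/i)·((k−i+1)/(k−i))·f_{k,i−1}·f_{k,i+1}. -/
/-- The Poisson binomial probability `f_{k,i}(p) = P(X₁+⋯+X_k = i)` for independent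
Bernoulli variables with parameters `p₁,…,p_k`: the coefficient of `z^i` in
`∏ⱼ ((1-pⱼ) + pⱼ z)`. -/
def poissonBinomial (k : ℕ) (p : Fin k → ℝ) (i : ℕ) : ℝ :=
  ∑ S ∈ Finset.powersetCard i (Finset.univ : Finset (Fin k)),
    (∏ j ∈ S, p j) * ∏ j ∈ Sᶜ, (1 - p j)

/-!
Write `P(z) = ∏ⱼ (pⱼ z + (1 - pⱼ))`, whose coefficients are the `f_{k,i}`, and normalize them to
`h_i = f_{k,i} · i! · (k - i)!`; ultra log-concavity is the log-concavity of `(h_i)`. Multiplying a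
polynomial of degree `≤ n` by a linear factor `a z + b` gives
`h'_j = b (n + 1 - j) h_j + a j h_{j-1}`, and an explicit sum-of-squares identity shows that this
recursion preserves log-concavity as long as the `h_j` are positive, i.e. for `pⱼ ∈ (0, 1)`.
Induction on the factors proves the claim in the open cube, and continuity extends it to `[0, 1]^k`.
-/

open Finset Polynomial
open scoped Nat

namespace Polynomial

/-- For `i ≤ n` this is `n! * A.coeff i / n.choose i`. -/
noncomputable def ulcCoeff (n : ℕ) (A : ℝ[X]) (i : ℕ) : ℝ :=
  A.coeff i * (i ! * (n - i)! : ℕ)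

def IsUltraLogConcave (n : ℕ) (A : ℝ[X]) : Prop :=
  ∀ i, ulcCoeff n A i * ulcCoeff n A (i + 2) ≤ ulcCoeff n A (i + 1) ^ 2

lemma ulcCoeff_of_natDegree_lt {n i : ℕ} {A : ℝ[X]} (h : A.natDegree < i) :
    ulcCoeff n A i = 0 := by
  rw [ulcCoeff, coeff_eq_zero_of_natDegree_lt h, zero_mul]

lemma natDegree_linear_mul_le {n : ℕ} {A : ℝ[X]} (hA : A.natDegree ≤ n) (a b : ℝ) :
    ((C a * X + C b) * A).natDegree ≤ n + 1 :=
  natDegree_mul_le.trans (by linarith [natDegree_linear_le (a := a) (b := b)])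

lemma coeff_linear_mul_zero (A : ℝ[X]) (a b : ℝ) :
    ((C a * X + C b) * A).coeff 0 = b * A.coeff 0 := by
  simp [add_mul, mul_assoc]

lemma coeff_linear_mul_succ (A : ℝ[X]) (a b : ℝ) (m : ℕ) :
    ((C a * X + C b) * A).coeff (m + 1) = a * A.coeff m + b * A.coeff (m + 1) := by
  simp [add_mul, mul_assoc, coeff_C_mul, coeff_X_mul]

lemma ulcCoeff_linear_mul {n : ℕ} {A : ℝ[X]} (hA : A.natDegree ≤ n) (a b : ℝ) {j : ℕ}
    (hj : j ≤ n + 1) :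
    ulcCoeff (n + 1) ((C a * X + C b) * A) j =
      b * ((n : ℝ) + 1 - j) * ulcCoeff n A j + a * j * ulcCoeff n A (j - 1) := by
  rcases j with _ | m
  · simp only [ulcCoeff, coeff_linear_mul_zero, Nat.sub_zero, Nat.factorial_succ]
    push_cast
    ring
  rcases (Nat.le_of_succ_le_succ hj).lt_or_eq with hm | rfl
  · obtain ⟨r, rfl⟩ := Nat.exists_eq_add_of_lt hm
    simp only [ulcCoeff, coeff_linear_mul_succ, Nat.add_sub_cancel,
      show m + r + 1 + 1 - (m + 1) = r + 1 by omega, show m + r + 1 - (m + 1) = r by omega,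
      show m + r + 1 - m = r + 1 by omega]
    push_cast [Nat.factorial_succ]
    ring
  · simp only [ulcCoeff, coeff_linear_mul_succ, coeff_eq_zero_of_natDegree_lt
      (Nat.lt_succ_of_le hA), Nat.add_sub_cancel, Nat.sub_self]
    push_cast [Nat.factorial_succ]
    ring

/-- `RHS - LHS = (q y - p x)² + q²(e² - 1)(y² - x z) + p²(c² - 1)(x² - w y)
  + p q (c - 1)(e - 1)(x y - w z)`, and `w z ≤ x y` follows from the two log-concavity hypotheses. -/
lemma mul_le_sq_of_logConcave {p q c e x y z w : ℝ} (hp : 0 ≤ p) (hq : 0 ≤ q) (hc : 1 ≤ c)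
    (he : 1 ≤ e) (hx : 0 < x) (hy : 0 < y) (hz : 0 ≤ z)
    (hxz : x * z ≤ y ^ 2) (hwy : w * y ≤ x ^ 2) :
    (q * (e + 1) * x + p * (c - 1) * w) * (q * (e - 1) * z + p * (c + 1) * y) ≤
      (q * e * y + p * c * x) ^ 2 := by
  have hwz : w * z ≤ x * y := by
    refine le_of_mul_le_mul_right ?_ (mul_pos hx hy)
    calc w * z * (x * y) = (w * y) * (x * z) := by ring
      _ ≤ x ^ 2 * y ^ 2 := mul_le_mul hwy hxz (by positivity) (by positivity)
      _ = x * y * (x * y) := by ring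
  have h₁ : 0 ≤ q ^ 2 * (e ^ 2 - 1) * (y ^ 2 - x * z) := by
    have : 1 ≤ e ^ 2 := by nlinarith
    apply mul_nonneg (mul_nonneg (sq_nonneg q) _) <;> linarith
  have h₂ : 0 ≤ p ^ 2 * (c ^ 2 - 1) * (x ^ 2 - w * y) := by
    have : 1 ≤ c ^ 2 := by nlinarith
    apply mul_nonneg (mul_nonneg (sq_nonneg p) _) <;> linarith
  have h₃ : 0 ≤ p * q * (c - 1) * (e - 1) * (x * y - w * z) := by
    apply mul_nonneg (mul_nonneg (mul_nonneg (mul_nonneg hp hq) _) _) <;> linarith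
  nlinarith [sq_nonneg (q * y - p * x)]

theorem IsUltraLogConcave.linear_mul {n : ℕ} {A : ℝ[X]} (hA : IsUltraLogConcave n A)
    (hdeg : A.natDegree ≤ n) (hpos : ∀ i ≤ n, 0 < A.coeff i) {a b : ℝ} (ha : 0 ≤ a)
    (hb : 0 ≤ b) : IsUltraLogConcave (n + 1) ((C a * X + C b) * A) := by
  intro i
  by_cases hi : n + 1 < i + 2
  · rw [ulcCoeff_of_natDegree_lt ((natDegree_linear_mul_le hdeg a b).trans_lt hi), mul_zero]
    exact sq_nonneg _
  have hpos' : ∀ j ≤ n, 0 < ulcCoeff n A j := fun j hj => mul_pos (hpos j hj) (by positivity)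
  have hnonneg : ∀ j, 0 ≤ ulcCoeff n A j := by
    intro j
    rcases le_or_gt j n with hj | hj
    · exact (hpos' j hj).le
    · exact (ulcCoeff_of_natDegree_lt (hdeg.trans_lt hj)).ge
  rw [ulcCoeff_linear_mul hdeg a b (by omega), ulcCoeff_linear_mul hdeg a b (by omega),
    ulcCoeff_linear_mul hdeg a b (by omega)]
  have he : (1 : ℝ) ≤ n - i := by
    rw [le_sub_iff_add_le]; exact_mod_cast (show 1 + i ≤ n by omega)
  rcases i with _ | m
  · have key := mul_le_sq_of_logConcave (w := 0) ha hb le_rfl he (hpos' 0 (by omega))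
      (hpos' 1 (by omega)) (hnonneg 2) (hA 0) (by rw [zero_mul]; positivity)
    push_cast at key ⊢
    linarith
  · have hc : (1 : ℝ) ≤ ↑(m + 1) + 1 := le_add_of_nonneg_left (Nat.cast_nonneg _)
    have key := mul_le_sq_of_logConcave ha hb hc he (hpos' (m + 1) (by omega))
      (hpos' (m + 2) (by omega)) (hnonneg (m + 3)) (hA (m + 1)) (hA m)
    push_cast at key ⊢
    ring_nf at key ⊢
    linarith

section LinearProduct

variable {ι : Type*} (s : Finset ι) {a b : ι → ℝ}

lemma natDegree_prod_linear_le : (∏ j ∈ s, (C (a j) * X + C (b j))).natDegree ≤ #s :=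
  (natDegree_prod_le s _).trans <| (sum_le_sum fun _ _ => natDegree_linear_le).trans_eq <| by simp

lemma coeff_prod_linear_pos (ha : ∀ j ∈ s, 0 < a j) (hb : ∀ j ∈ s, 0 < b j) :
    ∀ i ≤ #s, 0 < (∏ j ∈ s, (C (a j) * X + C (b j))).coeff i := by
  induction s using Finset.cons_induction with
  | empty => simp
  | cons k s hk ih =>
    simp only [forall_mem_cons] at ha hb
    have ih := ih ha.2 hb.2
    rw [prod_cons, card_cons]
    rintro (_ | m) hm
    · rw [coeff_linear_mul_zero]
      exact mul_pos hb.1 (ih 0 (Nat.zero_le _))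
    · have hnonneg : 0 ≤ (∏ j ∈ s, (C (a j) * X + C (b j))).coeff (m + 1) := by
        rcases le_or_gt (m + 1) #s with h | h
        · exact (ih _ h).le
        · exact (coeff_eq_zero_of_natDegree_lt ((natDegree_prod_linear_le s).trans_lt h)).ge
      rw [coeff_linear_mul_succ]
      exact add_pos_of_pos_of_nonneg (mul_pos ha.1 (ih m (by omega))) (mul_nonneg hb.1.le hnonneg)

theorem isUltraLogConcave_prod_linear (ha : ∀ j ∈ s, 0 < a j) (hb : ∀ j ∈ s, 0 < b j) :
    IsUltraLogConcave #s (∏ j ∈ s, (C (a j) * X + C (b j))) := by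
  induction s using Finset.cons_induction with
  | empty =>
    intro i
    rw [ulcCoeff_of_natDegree_lt (i := i + 2) (by simp), mul_zero]
    exact sq_nonneg _
  | cons k s hk ih =>
    rw [prod_cons, card_cons]
    simp only [forall_mem_cons] at ha hb
    exact (ih ha.2 hb.2).linear_mul (natDegree_prod_linear_le s)
      (coeff_prod_linear_pos s ha.2 hb.2) ha.1.le hb.1.le

end LinearProduct

theorem IsUltraLogConcave.le_sq {n i : ℕ} {A : ℝ[X]} (hA : IsUltraLogConcave n A)
    (h1 : 1 ≤ i) (h2 : i < n) :
    (((i : ℝ) + 1) / i) * ((((n : ℝ) - i) + 1) / ((n : ℝ) - i)) *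
        (A.coeff (i - 1) * A.coeff (i + 1)) ≤ A.coeff i ^ 2 := by
  obtain ⟨m, rfl⟩ := Nat.exists_eq_add_of_le' h1
  obtain ⟨r, rfl⟩ := Nat.exists_eq_add_of_lt h2
  have h := hA m
  simp only [ulcCoeff, show m + 1 + r + 1 - m = r + 2 by omega,
    show m + 1 + r + 1 - (m + 2) = r by omega, show m + 1 + r + 1 - (m + 1) = r + 1 by omega] at h
  push_cast [Nat.factorial_succ] at h ⊢
  have hD : 0 < ((m + 1) * (r + 1) * (m ! * r !) ^ 2 : ℝ) := by positivity
  rw [show m + 1 + 1 = m + 2 from rfl, show (m : ℝ) + 1 + r + 1 - (m + 1) = r + 1 by ring,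
    div_mul_div_comm, div_mul_eq_mul_div, div_le_iff₀ (by positivity)]
  refine le_of_mul_le_mul_left ?_ hD
  linear_combination h

end Polynomial

theorem le_on_pi_Icc_of_le_on_pi_Ioo {ι : Type*} {a b : ℝ} (hab : a ≠ b) {F G : (ι → ℝ) → ℝ}
    (hF : Continuous F) (hG : Continuous G) (h : ∀ q, (∀ j, q j ∈ Set.Ioo a b) → F q ≤ G q) :
    ∀ p, (∀ j, p j ∈ Set.Icc a b) → F p ≤ G p := by
  intro p hp
  have hsub : Set.univ.pi (fun _ => Set.Ioo a b) ⊆ {q | F q ≤ G q} :=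
    fun q hq => h q fun j => hq j trivial
  have hcl := closure_minimal hsub (isClosed_le hF hG)
  rw [closure_pi_set, funext fun _ => closure_Ioo hab] at hcl
  exact hcl fun j _ => hp j

theorem poissonBinomial_eq_coeff (k : ℕ) (p : Fin k → ℝ) (i : ℕ) :
    poissonBinomial k p i = (∏ j, (C (p j) * X + C (1 - p j))).coeff i := by
  have hterm : ∀ t : Finset (Fin k), (∏ j ∈ t, C (p j) * X) * ∏ j ∈ univ \ t, C (1 - p j) =
      C ((∏ j ∈ t, p j) * ∏ j ∈ tᶜ, (1 - p j)) * X ^ #t := by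
    intro t
    rw [prod_mul_distrib, prod_const, C_mul, map_prod, map_prod, compl_eq_univ_sdiff]
    ring
  simp only [prod_add, hterm, finsetSum_coeff, coeff_C_mul_X_pow, ← sum_filter,
    poissonBinomial, powersetCard_eq_filter, eq_comm (a := i)]

@[fun_prop]
theorem continuous_poissonBinomial (k i : ℕ) : Continuous fun p => poissonBinomial k p i := by
  unfold poissonBinomial
  fun_prop

/-- Poisson binomial probabilities are ultra log-concave: for
`p ∈ [0,1]^k` and `1 ≤ i ≤ k-1`,
`f_{k,i}² ≥ ((i+1)/i)·((k-i+1)/(k-i))·f_{k,i-1}·f_{k,i+1}`. -/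
theorem stmt14 (k : ℕ) (p : Fin k → ℝ) (hp : ∀ j, p j ∈ Set.Icc (0 : ℝ) 1)
    (i : ℕ) (h1 : 1 ≤ i) (h2 : i < k) :
    (((i : ℝ) + 1) / i) * ((((k : ℝ) - i) + 1) / ((k : ℝ) - i)) *
        (poissonBinomial k p (i - 1) * poissonBinomial k p (i + 1)) ≤
      (poissonBinomial k p i) ^ 2 := by
  revert p
  refine le_on_pi_Icc_of_le_on_pi_Ioo zero_ne_one (by fun_prop) (by fun_prop) fun q hq => ?_
  have hulc := isUltraLogConcave_prod_linear univ (fun j _ => (hq j).1)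
    (fun j _ => sub_pos.2 (hq j).2)
  rw [card_univ, Fintype.card_fin] at hulc
  simp only [poissonBinomial_eq_coeff]
  exact hulc.le_sq h1 h2
end

section
/- Newton's inequalities: if a real polynomial P(z) = Σ_{j=0}^k a_j z^j of degree at most k has only real roots, then for all 1 ≤ i ≤ k−1, (a_i/C(k,i))² ≥ (a_{i−1}/C(k,i−1))·(a_{i+1}/C(k,i+1)). -/
/-!
By Rolle's theorem the derivative of a real-rooted real polynomial is real-rooted, and reversing
the coefficients of a polynomial preserves real-rootedness. Differentiating `P` `i - 1` times,
reversing at degree `k - i + 1` and differentiating `k - i - 1` more times leaves a real-rooted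
polynomial of degree at most two whose coefficients are `k! / 2 · a_{i+1} / C(k, i+1)`,
`k! · a_i / C(k, i)` and `k! / 2 · a_{i-1} / C(k, i-1)`. Its discriminant is nonnegative, which
is Newton's inequality.
-/

open Polynomial
open scoped Nat

namespace Polynomial

theorem Splits.reverse {K : Type*} [Field K] {f : K[X]} (hf : f.Splits) : f.reverse.Splits := by
  have reverse_one : (1 : K[X]).reverse = 1 := by simpa using reverse_C (1 : K)
  refine Submonoid.closure_induction ?_ (by rw [reverse_one]; exact Splits.one)
    (fun f g _ _ hf hg ↦ reverse_mul_of_domain f g ▸ hf.mul hg) hf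
  rintro f (⟨a, rfl⟩ | ⟨a, rfl⟩)
  · simp
  · rw [reverse_add_C, natDegree_X, pow_one, ← one_mul X, reverse_mul_X, reverse_one, one_mul]
    exact Splits.of_natDegree_le_one (by compute_degree)

theorem Splits.reflect {K : Type*} [Field K] {f : K[X]} (hf : f.Splits) {N : ℕ}
    (hN : f.natDegree ≤ N) : (f.reflect N).Splits := by
  obtain ⟨m, rfl⟩ := Nat.exists_eq_add_of_le hN
  have h := reflect_mul f 1 le_rfl (natDegree_one.trans_le m.zero_le)
  rw [mul_one, reflect_one] at h
  rw [h]
  exact hf.reverse.mul (Splits.X_pow m)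

theorem Splits.derivative_of_real {p : ℝ[X]} (hp : p.Splits) : (derivative p).Splits := by
  by_cases hp' : derivative p = 0
  · rw [hp']; exact Splits.zero
  have hdeg : p.natDegree ≠ 0 := fun h ↦ hp' (by rw [eq_C_of_natDegree_eq_zero h, derivative_C])
  rw [splits_iff_card_roots] at hp ⊢
  have := p.card_roots_le_derivative
  have := (derivative p).card_roots'
  have := natDegree_derivative_le p
  omega

theorem Splits.iterate_derivative_of_real {p : ℝ[X]} (hp : p.Splits) (n : ℕ) :
    (derivative^[n] p).Splits := by
  induction n with
  | zero => exact hp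
  | succ n ih => rw [Function.iterate_succ_apply']; exact ih.derivative_of_real

theorem splits_of_forall_isRoot_map_im_eq_zero {p : ℝ[X]}
    (h : ∀ z : ℂ, (p.map (algebraMap ℝ ℂ)).IsRoot z → z.im = 0) : p.Splits :=
  (IsAlgClosed.splits _).of_splits_map _ fun z hz ↦
    ⟨z.re, Complex.ext rfl (h z (mem_roots'.mp hz).2).symm⟩

theorem Splits.four_mul_coeff_zero_mul_coeff_two_le_sq {K : Type*} [Field K] [LinearOrder K]
    [IsStrictOrderedRing K] {q : K[X]} (hq : q.Splits) (hdeg : q.natDegree ≤ 2) :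
    4 * q.coeff 0 * q.coeff 2 ≤ q.coeff 1 ^ 2 := by
  by_cases h2 : q.coeff 2 = 0
  · rw [h2, mul_zero]; exact sq_nonneg _
  have hdeg2 : q.natDegree = 2 := le_antisymm hdeg (le_natDegree_of_ne_zero h2)
  obtain ⟨x, hx⟩ := hq.exists_eval_eq_zero fun h ↦ by
    have := natDegree_eq_zero_iff_degree_le_zero.mpr h.le; omega
  rw [eval_eq_sum_range, hdeg2] at hx
  simp only [Finset.sum_range_succ, Finset.sum_range_zero] at hx
  have hdisc : discrim (q.coeff 2) (q.coeff 1) (q.coeff 0) = (2 * q.coeff 2 * x + q.coeff 1) ^ 2 :=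
    discrim_eq_sq_of_quadratic_eq_zero (by linear_combination hx)
  rw [discrim] at hdisc
  linarith [sq_nonneg (2 * q.coeff 2 * x + q.coeff 1)]

theorem factorial_mul_coeff_iterate_derivative {R : Type*} [CommSemiring R] (p : R[X]) (n c : ℕ) :
    (c ! : R) * (derivative^[n] p).coeff c = (c + n)! * p.coeff (c + n) := by
  rw [coeff_iterate_derivative, nsmul_eq_mul, ← mul_assoc, ← Nat.cast_mul,
    ← Nat.factorial_mul_descFactorial (Nat.le_add_left n c), Nat.add_sub_cancel]

theorem factorial_mul_factorial_mul_coeff_iterate_derivative_reflect {R : Type*} [CommSemiring R]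
    (p : R[X]) {c l m n : ℕ} (j : ℕ) (h : c + l + m = n) :
    (c ! * m ! : R) * (derivative^[l] (reflect n (derivative^[j] p))).coeff c
      = (c + l)! * (j + m)! * p.coeff (j + m) := by
  have hrev : revAt n (c + l) = m := by rw [revAt_le (by omega)]; omega
  calc (c ! * m ! : R) * (derivative^[l] (reflect n (derivative^[j] p))).coeff c
      = m ! * (c ! * (derivative^[l] (reflect n (derivative^[j] p))).coeff c) := by ring
    _ = (c + l)! * (m ! * (derivative^[j] p).coeff m) := by
      rw [factorial_mul_coeff_iterate_derivative, coeff_reflect, hrev]; ring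
    _ = (c + l)! * (j + m)! * p.coeff (j + m) := by
      rw [factorial_mul_coeff_iterate_derivative, mul_assoc, add_comm m]

theorem factorial_mul_factorial_mul_coeff_iterate_derivative_reflect_eq_choose {K : Type*}
    [Field K] [CharZero K] (p : K[X]) {c l m n : ℕ} (j : ℕ) (h : c + l + m = n) :
    (c ! * m ! : K) * (derivative^[l] (reflect n (derivative^[j] p))).coeff c
      = (j + n)! * (p.coeff (j + m) / (j + n).choose (j + m)) := by
  rw [factorial_mul_factorial_mul_coeff_iterate_derivative_reflect p j h,
    Nat.cast_choose K (by omega : j + m ≤ j + n), show j + n - (j + m) = c + l by omega]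
  have : ((j + n)! : K) ≠ 0 := Nat.cast_ne_zero.mpr (Nat.factorial_ne_zero _)
  field_simp

end Polynomial

/-- Newton's inequalities: if a real polynomial `P(z) = Σ_{j≤k} a_j z^j`
of degree at most `k` has only real roots, then for `1 ≤ i ≤ k-1`,
`(a_i/C(k,i))² ≥ (a_{i-1}/C(k,i-1))·(a_{i+1}/C(k,i+1))`. -/
theorem stmt18 (k : ℕ) (P : Polynomial ℝ) (hdeg : P.degree ≤ k)
    (hroots : ∀ z : ℂ, (P.map (algebraMap ℝ ℂ)).IsRoot z → z.im = 0)
    (i : ℕ) (h1 : 1 ≤ i) (h2 : i < k) :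
    (P.coeff (i - 1) / (k.choose (i - 1) : ℝ)) *
        (P.coeff (i + 1) / (k.choose (i + 1) : ℝ)) ≤
      (P.coeff i / (k.choose i : ℝ)) ^ 2 := by
  obtain ⟨j, rfl⟩ : ∃ j, i = j + 1 := ⟨i - 1, by omega⟩
  obtain ⟨l, rfl⟩ : ∃ l, k = j + (l + 2) := ⟨k - j - 2, by omega⟩
  have hPdeg : P.natDegree ≤ j + (l + 2) := natDegree_le_iff_degree_le.mpr hdeg
  have hgdeg : (derivative^[j] P).natDegree ≤ l + 2 :=
    (natDegree_iterate_derivative P j).trans (by omega)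
  set q := derivative^[l] (reflect (l + 2) (derivative^[j] P))
  have hP : P.Splits := splits_of_forall_isRoot_map_im_eq_zero hroots
  have hq : q.Splits :=
    ((hP.iterate_derivative_of_real j).reflect hgdeg).iterate_derivative_of_real l
  have hqdeg : q.natDegree ≤ 2 := (natDegree_iterate_derivative _ l).trans
    (by have := natDegree_reflect_le (N := l + 2) (p := derivative^[j] P); omega)
  have e0 : (0 ! * 2 ! : ℝ) * q.coeff 0 = _ :=
    factorial_mul_factorial_mul_coeff_iterate_derivative_reflect_eq_choose P j (by omega)
  have e1 : (1 ! * 1 ! : ℝ) * q.coeff 1 = _ :=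
    factorial_mul_factorial_mul_coeff_iterate_derivative_reflect_eq_choose P j (by omega)
  have e2 : (2 ! * 0 ! : ℝ) * q.coeff 2 = _ :=
    factorial_mul_factorial_mul_coeff_iterate_derivative_reflect_eq_choose P j (by omega)
  simp only [Nat.factorial_zero, Nat.factorial_one, Nat.factorial_two, Nat.cast_one,
    Nat.cast_ofNat, one_mul, mul_one, add_zero] at e0 e1 e2
  rw [Nat.add_sub_cancel, show j + 1 + 1 = j + 2 from rfl]
  have hF : (0 : ℝ) < ((j + (l + 2))! : ℝ) ^ 2 := by positivity
  refine le_of_mul_le_mul_left ?_ hF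
  calc _ = (2 * q.coeff 2) * (2 * q.coeff 0) := by rw [e0, e2]; ring
    _ ≤ q.coeff 1 ^ 2 := by linarith [hq.four_mul_coeff_zero_mul_coeff_two_le_sq hqdeg]
    _ = _ := by rw [e1]; ring
end
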